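/- (Disjoint basins) Let 𝓑 be a simple expansion set over X, let v be a full-support vertex, and let v_i ≠ v_j be full-support vertices, each joined to v by a cubical edge, with basins B_i and B_j relative to v. If v, v_i, v_j are all vertices of a common 2-dimensional cube 𝒞(v',v'') (with |v''| = 2), then B_i ∩ B_j = ∅. -/

import Mathlib

structure SimpleExpansionSet (B : Type*) (X : Type*) where
  supp : B → Set X
  supp_nonempty : ∀ b, (supp b).Nonempty
  E : B → Set (Finset B)
  self_mem : ∀ b, ({b} : Finset B) ∈ E b
  proper_unique : ∀ b : B, ∀ u ∈ E b, ∀ w ∈ E b, u ≠ {b} → w ≠ {b} → u = w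
  proper_disjoint : ∀ b : B, ∀ v ∈ E b, v ≠ {b} →
    ∀ b₁ ∈ v, ∀ b₂ ∈ v, b₁ ≠ b₂ → Disjoint (supp b₁) (supp b₂)
  proper_supp : ∀ b : B, ∀ v ∈ E b, v ≠ {b} → (⋃ b' ∈ v, supp b') = supp b
  proper_card : ∀ b : B, ∀ v ∈ E b, v ≠ {b} → 2 ≤ v.card

namespace SimpleExpansionSet

variable {B X : Type*}

/-- A vertex: a finite subset of `𝓑` whose members have pairwise disjoint supports. -/
def IsVertex (S : SimpleExpansionSet B X) (v : Finset B) : Prop :=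
  ∀ b₁ ∈ v, ∀ b₂ ∈ v, b₁ ≠ b₂ → Disjoint (S.supp b₁) (S.supp b₂)

/-- The support of a vertex. -/
def vsupp (S : SimpleExpansionSet B X) (v : Finset B) : Set X :=
  ⋃ b ∈ v, S.supp b

/-- `|ℰ(b)| = 2`, i.e. `b` admits a proper expansion. -/
def HasExpansion (S : SimpleExpansionSet B X) (b : B) : Prop :=
  ∃ u ∈ S.E b, u ≠ {b}

/-- The contraction basin of `b`: the unique member of `ℰ(b) - {{b}}` (when it exists). -/
noncomputable def Bas (S : SimpleExpansionSet B X) (b : B) : Finset B :=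
  @dite _ (S.HasExpansion b) (Classical.propDecidable _) (fun h => h.choose) (fun _ => {b})

/-- The restriction `r_b(u) = {b' ∈ u : supp b' ⊆ supp b}`. -/
noncomputable def restrict (S : SimpleExpansionSet B X) (b : B) (u : Finset B) : Finset B :=
  @Finset.filter _ (fun b' => S.supp b' ⊆ S.supp b) (Classical.decPred _) u

/-- The partial order on `ℰ(b)`: `{b}` is below everything. -/
def Eleq (b : B) (u w : Finset B) : Prop := u = w ∨ u = {b}

/-- The cube `𝒞(v₁, v₂)`, as a set of vertices. -/
noncomputable def cube [DecidableEq B] (S : SimpleExpansionSet B X) (v₁ v₂ : Finset B) :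
    Set (Finset B) :=
  { u | ∃ w ⊆ v₂, u = (v₁ \ v₂) ∪ (v₂ \ w) ∪ w.biUnion S.Bas }

/-- One expansion step: replace `b ∈ u` by its contraction basin. -/
def Step [DecidableEq B] (S : SimpleExpansionSet B X) (u v : Finset B) : Prop :=
  ∃ b ∈ u, S.HasExpansion b ∧ v = u.erase b ∪ S.Bas b

/-- The ascending-path relation `⪯`. -/
def Prec [DecidableEq B] (S : SimpleExpansionSet B X) : Finset B → Finset B → Prop :=
  Relation.ReflTransGen (S.Step)

/-- `u` is joined to `v` by a cubical edge with basin `Bsn` (relative to `v`). -/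
def BasinOf [DecidableEq B] (S : SimpleExpansionSet B X) (v u Bsn : Finset B) : Prop :=
  (∃ b ∈ v, S.HasExpansion b ∧ u = v.erase b ∪ S.Bas b ∧ Bsn = {b}) ∨
  (∃ b ∈ u, S.HasExpansion b ∧ v = u.erase b ∪ S.Bas b ∧ Bsn = S.Bas b)

end SimpleExpansionSet

/-! An edge of the cube `𝒞(v', v'')` moves along a single coordinate `b ∈ v''`: it swaps `b`
for `Bas b` (or back) and leaves every other coordinate alone, so its basin lies under
`supp b`. Since a vertex of the cube is determined by which coordinates it contains, two
different neighbours of `v` move along different coordinates, whose supports are disjoint. -/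

namespace SimpleExpansionSet

variable {B X : Type*}

theorem not_disjoint_supp_of_subset (S : SimpleExpansionSet B X) {a b c : B}
    (hca : S.supp c ⊆ S.supp a) (hcb : S.supp c ⊆ S.supp b) :
    ¬Disjoint (S.supp a) (S.supp b) := by
  obtain ⟨x, hx⟩ := S.supp_nonempty c
  exact Set.not_disjoint_iff.mpr ⟨x, hca hx, hcb hx⟩

theorem IsVertex.eq_of_supp_subset {S : SimpleExpansionSet B X} {v : Finset B}
    (hv : S.IsVertex v) {a b c : B} (ha : a ∈ v) (hb : b ∈ v)
    (hca : S.supp c ⊆ S.supp a) (hcb : S.supp c ⊆ S.supp b) : a = b := by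
  by_contra hab
  exact S.not_disjoint_supp_of_subset hca hcb (hv a ha b hb hab)

section Bas

variable (S : SimpleExpansionSet B X) {b : B}

theorem bas_mem_E_and_ne (hb : S.HasExpansion b) : S.Bas b ∈ S.E b ∧ S.Bas b ≠ {b} := by
  rw [Bas, dif_pos hb]
  exact hb.choose_spec

theorem supp_subset_of_mem_bas (hb : S.HasExpansion b) {c : B} (hc : c ∈ S.Bas b) :
    S.supp c ⊆ S.supp b := by
  obtain ⟨hE, hne⟩ := S.bas_mem_E_and_ne hb
  rw [← S.proper_supp b _ hE hne]
  exact Set.subset_biUnion_of_mem hc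

theorem isVertex_bas (hb : S.HasExpansion b) : S.IsVertex (S.Bas b) :=
  S.proper_disjoint b _ (S.bas_mem_E_and_ne hb).1 (S.bas_mem_E_and_ne hb).2

theorem exists_mem_bas_ne (hb : S.HasExpansion b) (a : B) : ∃ c ∈ S.Bas b, c ≠ a :=
  Finset.exists_mem_ne
    (one_lt_two.trans_le (S.proper_card b _ (S.bas_mem_E_and_ne hb).1 (S.bas_mem_E_and_ne hb).2)) a

theorem notMem_bas_self (hb : S.HasExpansion b) : b ∉ S.Bas b := by
  intro hbb
  obtain ⟨c, hc, hcb⟩ := S.exists_mem_bas_ne hb b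
  exact hcb ((S.isVertex_bas hb).eq_of_supp_subset hc hbb subset_rfl
    (S.supp_subset_of_mem_bas hb hc))

end Bas

theorem IsVertex.notMem_bas {S : SimpleExpansionSet B X} {v : Finset B} (hv : S.IsVertex v)
    {b c : B} (hbv : b ∈ v) (hb : S.HasExpansion b) (hc : c ∈ S.Bas b) : c ∉ v := fun hcv =>
  S.notMem_bas_self hb
    (hv.eq_of_supp_subset hcv hbv subset_rfl (S.supp_subset_of_mem_bas hb hc) ▸ hc)

section Cube

variable [DecidableEq B] (S : SimpleExpansionSet B X)

noncomputable def cubeVertex (v₁ v₂ w : Finset B) : Finset B :=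
  (v₁ \ v₂) ∪ (v₂ \ w) ∪ w.biUnion S.Bas

theorem mem_cube_iff {v₁ v₂ u : Finset B} :
    u ∈ S.cube v₁ v₂ ↔ ∃ w ⊆ v₂, u = S.cubeVertex v₁ v₂ w :=
  Iff.rfl

theorem mem_cubeVertex {v₁ v₂ w : Finset B} {c : B} :
    c ∈ S.cubeVertex v₁ v₂ w ↔
      (c ∈ v₁ ∧ c ∉ v₂) ∨ (c ∈ v₂ ∧ c ∉ w) ∨ ∃ a ∈ w, c ∈ S.Bas a := by
  simp only [cubeVertex, Finset.mem_union, Finset.mem_sdiff, Finset.mem_biUnion, or_assoc]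

variable {S} {v₁ v₂ w : Finset B}

theorem mem_cubeVertex_iff_of_mem (hv₁ : S.IsVertex v₁) (hsub : v₂ ⊆ v₁)
    (hexp : ∀ b ∈ v₂, S.HasExpansion b) (hw : w ⊆ v₂) {a : B} (ha : a ∈ v₂) :
    a ∈ S.cubeVertex v₁ v₂ w ↔ a ∉ w := by
  rw [mem_cubeVertex]
  constructor
  · rintro (⟨-, ha'⟩ | ⟨-, haw⟩ | ⟨a', ha'w, haa'⟩)
    · exact absurd ha ha'
    · exact haw
    · exact absurd (hsub ha) (hv₁.notMem_bas (hsub (hw ha'w)) (hexp a' (hw ha'w)) haa')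
  · exact fun haw => Or.inr (Or.inl ⟨ha, haw⟩)

theorem mem_cubeVertex_iff_of_mem_bas (hv₁ : S.IsVertex v₁) (hsub : v₂ ⊆ v₁)
    (hexp : ∀ b ∈ v₂, S.HasExpansion b) (hw : w ⊆ v₂) {a c : B} (ha : a ∈ v₂)
    (hc : c ∈ S.Bas a) : c ∈ S.cubeVertex v₁ v₂ w ↔ a ∈ w := by
  have hcv₁ : c ∉ v₁ := hv₁.notMem_bas (hsub ha) (hexp a ha) hc
  rw [mem_cubeVertex]
  constructor
  · rintro (⟨hc', -⟩ | ⟨hc', -⟩ | ⟨a', ha'w, hca'⟩)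
    · exact absurd hc' hcv₁
    · exact absurd (hsub hc') hcv₁
    · rwa [← hv₁.eq_of_supp_subset (hsub (hw ha'w)) (hsub ha)
        (S.supp_subset_of_mem_bas (hexp a' (hw ha'w)) hca')
        (S.supp_subset_of_mem_bas (hexp a ha) hc)]
  · exact fun haw => Or.inr (Or.inr ⟨a, haw, hc⟩)

theorem eq_of_mem_cube (hv₁ : S.IsVertex v₁) (hsub : v₂ ⊆ v₁)
    (hexp : ∀ b ∈ v₂, S.HasExpansion b) {u₁ u₂ : Finset B}
    (hu₁ : u₁ ∈ S.cube v₁ v₂) (hu₂ : u₂ ∈ S.cube v₁ v₂)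
    (h : ∀ a ∈ v₂, a ∈ u₁ ↔ a ∈ u₂) :
    u₁ = u₂ := by
  obtain ⟨w₁, hw₁, rfl⟩ := S.mem_cube_iff.mp hu₁
  obtain ⟨w₂, hw₂, rfl⟩ := S.mem_cube_iff.mp hu₂
  suffices w₁ = w₂ by rw [this]
  ext a
  by_cases ha : a ∈ v₂
  · have := h a ha
    rw [mem_cubeVertex_iff_of_mem hv₁ hsub hexp hw₁ ha,
      mem_cubeVertex_iff_of_mem hv₁ hsub hexp hw₂ ha] at this
    exact not_iff_not.mp this
  · exact iff_of_false (fun h => ha (hw₁ h)) (fun h => ha (hw₂ h))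

theorem mem_erase_union_bas_iff (hv₁ : S.IsVertex v₁) {v : Finset B} {a b : B}
    (ha : a ∈ v₁) (hb : b ∈ v₁) (hbexp : S.HasExpansion b) :
    a ∈ v.erase b ∪ S.Bas b ↔ a ∈ v ∧ a ≠ b := by
  have : a ∉ S.Bas b := fun hab => hv₁.notMem_bas hb hbexp hab ha
  simp only [Finset.mem_union, Finset.mem_erase, this, or_false, and_comm]

theorem mem_of_erase_union_bas_mem_cube (hv₁ : S.IsVertex v₁) (hsub : v₂ ⊆ v₁)
    (hexp : ∀ b ∈ v₂, S.HasExpansion b) {v : Finset B} {b : B} (hbv : b ∈ v)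
    (hbexp : S.HasExpansion b) (hv : v ∈ S.cube v₁ v₂)
    (hu : v.erase b ∪ S.Bas b ∈ S.cube v₁ v₂) : b ∈ v₂ := by
  obtain ⟨wv, hwv, rfl⟩ := S.mem_cube_iff.mp hv
  obtain ⟨wu, hwu, hu⟩ := S.mem_cube_iff.mp hu
  have hbu : b ∉ S.cubeVertex v₁ v₂ wu := by
    simp [← hu, S.notMem_bas_self hbexp]
  rcases S.mem_cubeVertex.mp hbv with hb | ⟨hb, -⟩ | ⟨a, haw, hba⟩
  · exact absurd (S.mem_cubeVertex.mpr (Or.inl hb)) hbu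
  · exact hb
  · have ha := hwv haw
    -- another member `c` of `Bas a` survives the step, which forces `a` to be expanded in `u`
    obtain ⟨c, hca, hcb⟩ := S.exists_mem_bas_ne (hexp a ha) b
    have hcv := (mem_cubeVertex_iff_of_mem_bas hv₁ hsub hexp hwv ha hca).mpr haw
    have hcu : c ∈ S.cubeVertex v₁ v₂ wu := by
      rw [← hu]
      exact Finset.mem_union_left _ (Finset.mem_erase.mpr ⟨hcb, hcv⟩)
    have hawu := (mem_cubeVertex_iff_of_mem_bas hv₁ hsub hexp hwu ha hca).mp hcu
    exact absurd ((mem_cubeVertex_iff_of_mem_bas hv₁ hsub hexp hwu ha hba).mpr hawu) hbu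

theorem exists_direction_of_basinOf (hv₁ : S.IsVertex v₁) (hsub : v₂ ⊆ v₁)
    (hexp : ∀ b ∈ v₂, S.HasExpansion b) {v u Bsn : Finset B}
    (hv : v ∈ S.cube v₁ v₂) (hu : u ∈ S.cube v₁ v₂) (hB : S.BasinOf v u Bsn) :
    ∃ b ∈ v₂, (∀ c ∈ Bsn, S.supp c ⊆ S.supp b) ∧
      ∀ a ∈ v₂, (a ∈ u ↔ (a ∈ v ↔ a ≠ b)) := by
  rcases hB with ⟨b, hbv, hbexp, rfl, rfl⟩ | ⟨b, hbu, hbexp, rfl, rfl⟩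
  · have hb := mem_of_erase_union_bas_mem_cube hv₁ hsub hexp hbv hbexp hv hu
    refine ⟨b, hb, fun c hc => by rw [Finset.mem_singleton.mp hc], fun a ha => ?_⟩
    rw [mem_erase_union_bas_iff hv₁ (hsub ha) (hsub hb) hbexp]
    by_cases hab : a = b <;> simp [hab, hbv]
  · have hb := mem_of_erase_union_bas_mem_cube hv₁ hsub hexp hbu hbexp hu hv
    refine ⟨b, hb, fun c hc => S.supp_subset_of_mem_bas hbexp hc, fun a ha => ?_⟩
    rw [mem_erase_union_bas_iff hv₁ (hsub ha) (hsub hb) hbexp]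
    by_cases hab : a = b <;> simp [hab, hbu]

end Cube

end SimpleExpansionSet

open SimpleExpansionSet

theorem basins_disjoint_general {B X : Type*} [DecidableEq B] (S : SimpleExpansionSet B X)
    (v vi vj Bi Bj : Finset B)
    (hne : vi ≠ vj)
    (hBi : S.BasinOf v vi Bi) (hBj : S.BasinOf v vj Bj)
    (v' v'' : Finset B) (hv' : S.IsVertex v') (hsub : v'' ⊆ v')
    (hexp : ∀ b ∈ v'', S.HasExpansion b)
    (hmv : v ∈ S.cube v' v'') (hmi : vi ∈ S.cube v' v'') (hmj : vj ∈ S.cube v' v'') :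
    Bi ∩ Bj = ∅ := by
  obtain ⟨bi, hbi, hBi_supp, hvi⟩ := exists_direction_of_basinOf hv' hsub hexp hmv hmi hBi
  obtain ⟨bj, hbj, hBj_supp, hvj⟩ := exists_direction_of_basinOf hv' hsub hexp hmv hmj hBj
  have hbij : bi ≠ bj := by
    rintro rfl
    exact hne (eq_of_mem_cube hv' hsub hexp hmi hmj fun a ha =>
      (hvi a ha).trans (hvj a ha).symm)
  refine Finset.eq_empty_of_forall_notMem fun c hc => hbij ?_
  rw [Finset.mem_inter] at hc
  exact hv'.eq_of_supp_subset (hsub hbi) (hsub hbj) (hBi_supp c hc.1) (hBj_supp c hc.2)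

/-- Disjoint basins: if `v, v_i, v_j` lie in a common 2-dimensional cube,
the basins of `v_i` and `v_j` relative to `v` are disjoint. -/
theorem basins_disjoint {B X : Type*} [DecidableEq B] (S : SimpleExpansionSet B X)
    (v vi vj Bi Bj : Finset B)
    (hv : S.IsVertex v) (hvfull : S.vsupp v = Set.univ)
    (hvi : S.IsVertex vi) (hvifull : S.vsupp vi = Set.univ)
    (hvj : S.IsVertex vj) (hvjfull : S.vsupp vj = Set.univ)
    (hne : vi ≠ vj)
    (hBi : S.BasinOf v vi Bi) (hBj : S.BasinOf v vj Bj)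
    (v' v'' : Finset B) (hv' : S.IsVertex v') (hsub : v'' ⊆ v')
    (hexp : ∀ b ∈ v'', S.HasExpansion b) (hc2 : v''.card = 2)
    (hmv : v ∈ S.cube v' v'') (hmi : vi ∈ S.cube v' v'') (hmj : vj ∈ S.cube v' v'') :
    Bi ∩ Bj = ∅ :=
  basins_disjoint_general S v vi vj Bi Bj hne hBi hBj v' v'' hv' hsub hexp hmv hmi hmj
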